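/- For every integer n with 0 ≤ n ≤ 2δ−3 one has τ(npq) = n(n−2δ+3)/2 and Δ_{npq} = 1. -/

import Mathlib

/-- `Δ_j = 1 + 2j − ⌈jp'/p⌉ − ⌈jq'/q⌉ − ⌈j(pq−2)/(pq−1)⌉`, the increment of the τ-function of
the negative definite Seifert manifold `Σ(−2,(p,p'),(q,q'),(pq−1,pq−2)) = −S³₁(T_{p,q})`. -/
def torusDelta (p q p' q' : ℕ) (j : ℕ) : ℤ :=
  1 + 2 * (j : ℤ) - ⌈((j : ℚ) * (p' : ℚ)) / (p : ℚ)⌉ - ⌈((j : ℚ) * (q' : ℚ)) / (q : ℚ)⌉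
    - ⌈((j : ℚ) * ((p : ℚ) * (q : ℚ) - 2)) / ((p : ℚ) * (q : ℚ) - 1)⌉

/-- `τ(m) = Σ_{j=0}^{m−1} Δ_j`. -/
def torusTau (p q p' q' : ℕ) (m : ℕ) : ℤ := ∑ j ∈ Finset.range m, torusDelta p q p' q' j


/-!
With `N = pq - 1` the third ceiling is `⌈j(N - 1)/N⌉ = j - ⌊j/N⌋`, and the congruences defining
`p'`, `q'` together with `0 < p' < p`, `0 < q' < q` force `qp' + pq' = pq + 1` (the left side is
`≡ 1` modulo `pq` and lies strictly between `1` and `2pq + 1`). At `j = npq` the two remaining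
ceilings are exact and `⌊npq/N⌋ = ⌊n(N + 1)/N⌋ = n` because `n < N`, so `Δ_{npq} = 1`.

For `τ`, the function `j ↦ ⌈ja/b⌉` increases by `a` when `j` increases by `b`, and for coprime
`a`, `b` its values at `i` and `b - i` (`0 < i < b`) add up to `a + 1`; this evaluates its sum
over `j < kb` block by block. The sum of `⌊j/N⌋` over `j < npq = nN + n` is handled in the same
way, and `qp' + pq' = pq + 1` collapses the result to `n(n - 2δ + 3)/2`.
-/

open Finset

section BlockSums

variable (f : ℕ → ℤ) {b : ℕ} {d : ℤ}

theorem apply_add_mul_eq_of_apply_add_eq (hf : ∀ j, f (j + b) = f j + d) (j k : ℕ) :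
    f (j + k * b) = f j + k * d := by
  induction k with
  | zero => simp
  | succ k ih =>
    rw [show j + (k + 1) * b = j + k * b + b by ring, hf, ih]
    push_cast
    ring

theorem two_mul_sum_range_mul_of_apply_add_eq (hf : ∀ j, f (j + b) = f j + d) (k : ℕ) :
    2 * ∑ j ∈ range (k * b), f j = k * (2 * ∑ j ∈ range b, f j) + b * d * k * (k - 1) := by
  induction k with
  | zero => simp
  | succ k ih =>
    have hblock : ∑ i ∈ range b, f (k * b + i) = ∑ i ∈ range b, f i + b * (k * d) := by
      simp_rw [add_comm (k * b), apply_add_mul_eq_of_apply_add_eq f hf, sum_add_distrib,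
        sum_const, card_range, nsmul_eq_mul]
    rw [add_one_mul, sum_range_add, mul_add, ih, hblock]
    push_cast
    ring

theorem two_mul_sum_range_of_apply_add_apply_sub_eq (hb : 0 < b) (c : ℤ) (h0 : f 0 = 0)
    (hc : ∀ i, 0 < i → i < b → f i + f (b - i) = c) :
    2 * ∑ j ∈ range b, f j = (b - 1) * c := by
  obtain ⟨b, rfl⟩ : ∃ b', b = b' + 1 := ⟨b - 1, by omega⟩
  have hpairs : ∀ j ∈ range b, f (j + 1) + f (b - 1 - j + 1) = c := fun j hj => by
    rw [show b - 1 - j + 1 = b + 1 - (j + 1) by grind]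
    exact hc (j + 1) j.succ_pos (by grind)
  rw [sum_range_succ', h0, add_zero, two_mul]
  nth_rw 2 [← sum_range_reflect]
  rw [← sum_add_distrib, sum_congr rfl hpairs, sum_const, card_range, nsmul_eq_mul]
  push_cast
  ring

end BlockSums

theorem two_mul_sum_range_natCast (m : ℕ) : 2 * ∑ j ∈ range m, (j : ℤ) = m * (m - 1) := by
  induction m with
  | zero => simp
  | succ m ih =>
    rw [sum_range_succ, mul_add, ih]
    push_cast
    ring

section FloorCeil

variable {K : Type*} [Field K] [LinearOrder K] [IsOrderedRing K] [FloorRing K] {a b : ℕ}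

theorem Int.ceil_natCast_div_eq_floor_add_one {s : ℕ} (hb : b ≠ 0) (hs : ¬ b ∣ s) :
    ⌈(s : K) / b⌉ = ⌊(s : K) / b⌋ + 1 := by
  rw [Int.ceil_eq_floor_add_one_iff_notMem, ← Int.fract_eq_zero_iff,
    Int.fract_div_natCast_eq_div_natCast_mod]
  exact div_ne_zero (Nat.cast_ne_zero.mpr fun h => hs (Nat.dvd_of_mod_eq_zero h))
    (Nat.cast_ne_zero.mpr hb)

theorem ceil_mul_div_add_ceil_sub_mul_div (hab : a.Coprime b) {i : ℕ} (hi : 0 < i)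
    (hib : i < b) :
    ⌈(i : K) * a / b⌉ + ⌈((b - i : ℕ) : K) * a / b⌉ = a + 1 := by
  have hbK : (b : K) ≠ 0 := Nat.cast_ne_zero.mpr (by omega)
  have hndvd : ¬ b ∣ i * a := fun h =>
    (Nat.le_of_dvd hi (hab.symm.dvd_of_dvd_mul_right h)).not_gt hib
  have hrefl : ((b - i : ℕ) : K) * a / b = -((i * a : ℕ) / b : K) + (a : ℕ) := by
    rw [Nat.cast_sub hib.le]
    push_cast
    field_simp
    ring
  rw [hrefl, Int.ceil_add_natCast, Int.ceil_neg, ← Nat.cast_mul,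
    Int.ceil_natCast_div_eq_floor_add_one (by omega) hndvd]
  ring

theorem ceil_add_mul_div (hb : b ≠ 0) (j : ℕ) :
    ⌈((j + b : ℕ) : K) * a / b⌉ = ⌈(j : K) * a / b⌉ + a := by
  have hbK : (b : K) ≠ 0 := by positivity
  rw [show ((j + b : ℕ) : K) * a / b = (j : K) * a / b + (a : ℕ) by push_cast; field_simp,
    Int.ceil_add_natCast]

theorem ceil_natCast_mul_mul_div (hb : b ≠ 0) (k : ℕ) :
    ⌈((k * b : ℕ) : K) * a / b⌉ = k * a := by
  have hbK : (b : K) ≠ 0 := by positivity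
  rw [show ((k * b : ℕ) : K) * a / b = ((k * a : ℕ) : K) by push_cast; field_simp,
    Int.ceil_natCast, Nat.cast_mul]

theorem two_mul_sum_ceil_mul_div (hb : 0 < b) (hab : a.Coprime b) (k : ℕ) :
    2 * ∑ j ∈ range (k * b), ⌈(j : K) * a / b⌉
      = k * ((b - 1) * (a + 1)) + b * a * k * (k - 1) := by
  rw [two_mul_sum_range_mul_of_apply_add_eq _ (ceil_add_mul_div hb.ne'),
    two_mul_sum_range_of_apply_add_apply_sub_eq (fun j => ⌈(j : K) * a / b⌉) hb _ (by simp)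
      (fun i hi hib => ceil_mul_div_add_ceil_sub_mul_div hab hi hib)]

theorem ceil_mul_sub_one_div {N : ℕ} (hN : N ≠ 0) (j : ℕ) :
    ⌈(j : K) * (N - 1) / N⌉ = j - (j : ℤ) / N := by
  have hNK : (N : K) ≠ 0 := by positivity
  rw [show (j : K) * (N - 1) / N = -((j : K) / N) + (j : ℕ) by field_simp; ring,
    Int.ceil_add_natCast, Int.ceil_neg, Int.floor_div_natCast, Int.floor_natCast]
  ring

end FloorCeil

theorem two_mul_sum_range_ediv {N : ℕ} (hN : 0 < N) (k r : ℕ) (hr : r ≤ N) :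
    2 * ∑ j ∈ range (k * N + r), (j : ℤ) / N = N * k * (k - 1) + 2 * k * r := by
  have hN' : (N : ℤ) ≠ 0 := by positivity
  have hshift : ∀ j : ℕ, ((j + N : ℕ) : ℤ) / N = (j : ℤ) / N + 1 := fun j => by
    simpa using Int.add_mul_ediv_right (j : ℤ) 1 hN'
  have hsmall : ∀ i < N, (i : ℤ) / N = 0 := fun i hi => Int.ediv_eq_zero_of_lt (by positivity)
    (by exact_mod_cast hi)
  have htail : ∀ i ∈ range r, ((k * N + i : ℕ) : ℤ) / N = k := fun i hi => by
    rw [add_comm, apply_add_mul_eq_of_apply_add_eq (fun j => (j : ℤ) / N) hshift,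
      hsmall i (by grind)]
    ring
  rw [sum_range_add, mul_add, two_mul_sum_range_mul_of_apply_add_eq _ hshift,
    sum_congr rfl (fun i hi => hsmall i (mem_range.mp hi)), sum_congr rfl htail]
  simp only [sum_const_zero, card_range, sum_const, nsmul_eq_mul]
  ring

section TorusKnot

variable {p q p' q' N n : ℕ}

theorem mul_add_mul_eq_mul_add_one (hcop : p.Coprime q) (hp'0 : 0 < p') (hp' : p' < p)
    (hq'0 : 0 < q') (hq' : q' < q) (hpp' : p' * q ≡ 1 [MOD p]) (hqq' : p * q' ≡ 1 [MOD q]) :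
    q * p' + p * q' = p * q + 1 := by
  have hmodp : q * p' + p * q' ≡ 1 [MOD p] := by
    simpa [mul_comm q] using hpp'.add (Nat.modEq_zero_iff_dvd.mpr (dvd_mul_right p q'))
  have hmodq : q * p' + p * q' ≡ 1 [MOD q] := by
    simpa using (Nat.modEq_zero_iff_dvd.mpr (dvd_mul_right q p')).add hqq'
  have hlow : p + q ≤ q * p' + p * q' := by nlinarith
  have hhigh : q * p' + p * q' < 2 * (p * q) := by nlinarith
  obtain ⟨t, ht⟩ := (Nat.modEq_iff_dvd' (by omega)).mp
    ((Nat.modEq_and_modEq_iff_modEq_mul hcop).mp ⟨hmodp, hmodq⟩).symm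
  have ht2 : t < 2 := Nat.lt_of_mul_lt_mul_left (a := p * q) (by omega)
  have ht0 : t ≠ 0 := by rintro rfl; omega
  obtain rfl : t = 1 := by omega
  omega

theorem torusDelta_eq (hN : p * q = N + 1) (hN0 : N ≠ 0) (j : ℕ) :
    torusDelta p q p' q' j = 1 + j + (j : ℤ) / N - ⌈(j : ℚ) * p' / p⌉ - ⌈(j : ℚ) * q' / q⌉ := by
  have hNQ : (p : ℚ) * q = N + 1 := by exact_mod_cast hN
  rw [torusDelta, hNQ, show (N : ℚ) + 1 - 2 = N - 1 by ring, add_sub_cancel_right,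
    ceil_mul_sub_one_div hN0]
  ring

theorem torusDelta_mul_eq_one (hkey : q * p' + p * q' = p * q + 1) (hN : p * q = N + 1)
    (hn : n < N) : torusDelta p q p' q' (n * p * q) = 1 := by
  have hp : p ≠ 0 := by rintro rfl; simp at hN
  have hq : q ≠ 0 := by rintro rfl; simp at hN
  have hfloor : ((n * p * q : ℕ) : ℤ) / N = n := by
    rw [show n * p * q = n + n * N by rw [mul_assoc, hN]; ring, Nat.cast_add, Nat.cast_mul,
      Int.add_mul_ediv_right _ _ (by omega), Int.ediv_eq_zero_of_lt (by positivity) (by omega),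
      zero_add]
  have hceil_p : ⌈((n * p * q : ℕ) : ℚ) * p' / p⌉ = (n * q : ℕ) * p' := by
    rw [show n * p * q = n * q * p by ring, ceil_natCast_mul_mul_div hp]
  have hceil_q : ⌈((n * p * q : ℕ) : ℚ) * q' / q⌉ = (n * p : ℕ) * q' :=
    ceil_natCast_mul_mul_div hq _
  have hkeyZ : (q : ℤ) * p' + p * q' = p * q + 1 := by exact_mod_cast hkey
  rw [torusDelta_eq hN (by omega), hfloor, hceil_p, hceil_q]
  push_cast
  linear_combination (-(n : ℤ)) * hkeyZ

theorem two_mul_torusTau_mul (hkey : q * p' + p * q' = p * q + 1) (hp' : p'.Coprime p)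
    (hq' : q'.Coprime q) (hN : p * q = N + 1) (hn : n < N) :
    2 * torusTau p q p' q' (n * p * q) = n * (n - (p - 1) * (q - 1) + 3) := by
  have hp : 0 < p := Nat.pos_of_ne_zero (by rintro rfl; simp at hN)
  have hq : 0 < q := Nat.pos_of_ne_zero (by rintro rfl; simp at hN)
  have hid : 2 * ∑ j ∈ range (n * p * q), (j : ℤ) = n * p * q * (n * p * q - 1) := by
    exact_mod_cast two_mul_sum_range_natCast (n * p * q)
  have hfloor : 2 * ∑ j ∈ range (n * p * q), (j : ℤ) / N = N * n * (n - 1) + 2 * n * n := by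
    rw [show n * p * q = n * N + n by rw [mul_assoc, hN]; ring]
    exact two_mul_sum_range_ediv (by omega) n n hn.le
  have hceil_p : 2 * ∑ j ∈ range (n * p * q), ⌈(j : ℚ) * p' / p⌉
      = n * q * ((p - 1) * (p' + 1)) + p * p' * (n * q) * (n * q - 1) := by
    rw [show n * p * q = n * q * p by ring, two_mul_sum_ceil_mul_div hp hp']
    push_cast
    rfl
  have hceil_q : 2 * ∑ j ∈ range (n * p * q), ⌈(j : ℚ) * q' / q⌉
      = n * p * ((q - 1) * (q' + 1)) + q * q' * (n * p) * (n * p - 1) := by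
    rw [two_mul_sum_ceil_mul_div hq hq']
    push_cast
    rfl
  have hkeyZ : (q : ℤ) * p' + p * q' = p * q + 1 := by exact_mod_cast hkey
  have hNZ : (p : ℤ) * q = N + 1 := by exact_mod_cast hN
  rw [torusTau, sum_congr rfl fun j _ => torusDelta_eq hN (by omega) j]
  simp only [sum_sub_distrib, sum_add_distrib, sum_const, card_range, nsmul_eq_mul, mul_one]
  push_cast
  linear_combination hid + hfloor - hceil_p - hceil_q - n * (n * p * q - 1) * hkeyZ
    - n * (n - 1) * hNZ

end TorusKnot

theorem torusTau_at_npq_general (p q : ℕ) (hcop : Nat.Coprime p q)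
    (δ : ℕ) (hδ : 2 * δ = (p - 1) * (q - 1))
    (p' : ℕ) (hp'pos : 0 < p') (hp'lt : p' < p) (hp' : p' * q ≡ 1 [MOD p])
    (q' : ℕ) (hq'pos : 0 < q') (hq'lt : q' < q) (hq' : p * q' ≡ 1 [MOD q])
    (n : ℕ) (hn : (n : ℤ) ≤ 2 * (δ : ℤ) - 3) :
    (torusTau p q p' q' (n * p * q) : ℚ) = (n : ℚ) * ((n : ℚ) - 2 * (δ : ℚ) + 3) / 2 ∧
      torusDelta p q p' q' (n * p * q) = 1 := by
  have hkey := mul_add_mul_eq_mul_add_one hcop hp'pos hp'lt hq'pos hq'lt hp' hq'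
  obtain ⟨N, hN⟩ : ∃ N, p * q = N + 1 :=
    ⟨p * q - 1, by have := Nat.mul_pos (hp'pos.trans hp'lt) (hq'pos.trans hq'lt); omega⟩
  have hδZ : 2 * (δ : ℤ) = (p - 1) * (q - 1) := by
    rw [← Nat.cast_pred (hp'pos.trans hp'lt), ← Nat.cast_pred (hq'pos.trans hq'lt)]
    exact_mod_cast hδ
  have hnN : n < N := by
    have hNZ : (p : ℤ) * q = N + 1 := by exact_mod_cast hN
    have : (n : ℤ) < N := by linarith
    exact_mod_cast this
  refine ⟨?_, torusDelta_mul_eq_one hkey hN hnN⟩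
  have hτ := two_mul_torusTau_mul hkey (Nat.coprime_of_mul_modEq_one q hp')
    (Nat.coprime_of_mul_modEq_one p (by rwa [mul_comm] at hq')) hN hnN
  rw [← hδZ] at hτ
  rw [eq_div_iff two_ne_zero, mul_comm]
  exact_mod_cast hτ

/-- for `0 ≤ n ≤ 2δ−3` one has `τ(npq) = n(n−2δ+3)/2` and `Δ_{npq} = 1`. -/
theorem torusTau_at_npq (p q : ℕ) (hp : 2 ≤ p) (hpq : p < q) (hcop : Nat.Coprime p q)
    (δ : ℕ) (hδ : 2 * δ = (p - 1) * (q - 1))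
    (p' : ℕ) (hp'pos : 0 < p') (hp'lt : p' < p) (hp' : p' * q ≡ 1 [MOD p])
    (q' : ℕ) (hq'pos : 0 < q') (hq'lt : q' < q) (hq' : p * q' ≡ 1 [MOD q])
    (n : ℕ) (hn : (n : ℤ) ≤ 2 * (δ : ℤ) - 3) :
    (torusTau p q p' q' (n * p * q) : ℚ) = (n : ℚ) * ((n : ℚ) - 2 * (δ : ℚ) + 3) / 2 ∧
      torusDelta p q p' q' (n * p * q) = 1 :=
  torusTau_at_npq_general p q hcop δ hδ p' hp'pos hp'lt hp' q' hq'pos hq'lt hq' n hn
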